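/- arXiv:1909.02877 — 3 statements merged into one kernel-verified Lean document; each statement's English description precedes it below -/
import Mathlib

section
/- If P is a row-stochastic matrix with stationary distribution ξ having all entries positive, and Ξ = diag(ξ), then for γ ∈ (0,1) the matrix Ξ(γP - I) is negative definite: x^T Ξ(γP - I) x < 0 for all nonzero x ∈ ℝ^n. -/
open Matrix

theorem stmt4 {n : ℕ} (P : Matrix (Fin n) (Fin n) ℝ)
    (hpos : ∀ i j, 0 ≤ P i j) (hrow : ∀ i, ∑ j, P i j = 1)
    (ξ : Fin n → ℝ) (hξpos : ∀ i, 0 < ξ i) (hξsum : ∑ i, ξ i = 1)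
    (hstat : ∀ j, ∑ i, ξ i * P i j = ξ j)
    (γ : ℝ) (hγ : γ ∈ Set.Ioo (0:ℝ) 1) :
    ∀ x : Fin n → ℝ, x ≠ 0 →
      x ⬝ᵥ (Matrix.diagonal ξ * (γ • P - 1)).mulVec x < 0 := by
  intro x hx
  obtain ⟨hγ0, hγ1⟩ := hγ
  set S : ℝ := ∑ i, ξ i * (x i)^2 with hSdef
  set A : ℝ := ∑ i, ∑ j, ξ i * P i j * (x i * x j) with hAdef
  have hS : 0 < S := by
    obtain ⟨i, hi⟩ : ∃ i, x i ≠ 0 := by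
      by_contra h; push_neg at h; exact hx (funext h)
    apply Finset.sum_pos' (fun i _ => mul_nonneg (hξpos i).le (sq_nonneg _))
    exact ⟨i, Finset.mem_univ i, mul_pos (hξpos i) (by positivity)⟩
  have hA : A ≤ S := by
    have step : A ≤ ∑ i, ∑ j, ξ i * P i j * (((x i)^2 + (x j)^2)/2) := by
      apply Finset.sum_le_sum
      intro i _
      apply Finset.sum_le_sum
      intro j _
      have h1 : x i * x j ≤ ((x i)^2 + (x j)^2)/2 := by nlinarith [sq_nonneg (x i - x j)]
      have h2 : 0 ≤ ξ i * P i j := mul_nonneg (hξpos i).le (hpos i j)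
      exact mul_le_mul_of_nonneg_left h1 h2
    have eq1 : ∑ i, ∑ j, ξ i * P i j * (((x i)^2 + (x j)^2)/2) = S := by
      have expand : ∀ i j, ξ i * P i j * (((x i)^2 + (x j)^2)/2)
          = (ξ i * (x i)^2 * P i j)/2 + (ξ i * P i j * (x j)^2)/2 := by
        intro i j; ring
      simp only [expand, Finset.sum_add_distrib]
      have t1 : ∑ i, ∑ j, (ξ i * (x i)^2 * P i j)/2 = S/2 := by
        rw [hSdef, Finset.sum_div]
        apply Finset.sum_congr rfl
        intro i _
        rw [← Finset.sum_div, ← Finset.mul_sum, hrow i, mul_one]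
      have t2 : ∑ i, ∑ j, (ξ i * P i j * (x j)^2)/2 = S/2 := by
        rw [Finset.sum_comm, hSdef, Finset.sum_div]
        apply Finset.sum_congr rfl
        intro j _
        rw [← Finset.sum_div]
        congr 1
        rw [← Finset.sum_mul]
        rw [hstat j]
      rw [t1, t2]; ring
    linarith
  have key : x ⬝ᵥ (Matrix.diagonal ξ * (γ • P - 1)).mulVec x = γ * A - S := by
    have hM : ∀ i j, (Matrix.diagonal ξ * (γ • P - 1)) i j
        = ξ i * (γ * P i j - if i = j then 1 else 0) := by
      intro i j
      simp [Matrix.mul_apply, Matrix.diagonal_apply, Matrix.one_apply, Finset.sum_ite_eq,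
        ite_mul, Matrix.sub_apply, Matrix.smul_apply, smul_eq_mul]
    have hterm : ∀ i j, x i * ((Matrix.diagonal ξ * (γ • P - 1)) i j * x j)
        = γ * (ξ i * P i j * (x i * x j)) - (if i = j then ξ i * (x i * x j) else 0) := by
      intro i j
      rw [hM]
      by_cases h : i = j <;> simp [h] <;> ring
    simp only [dotProduct, Matrix.mulVec, Finset.mul_sum]
    simp only [hterm, Finset.sum_sub_distrib]
    rw [hAdef, hSdef, Finset.mul_sum]
    congr 1
    · apply Finset.sum_congr rfl; intro i _; rw [Finset.mul_sum]
    · apply Finset.sum_congr rfl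
      intro i _
      simp [Finset.sum_ite_eq, sq]
  rw [key]
  rcases le_or_gt A 0 with h | h
  · nlinarith
  · nlinarith
end

section
/- Let P be row-stochastic with positive stationary distribution ξ, Ξ = diag(ξ), γ, λ ∈ (0,1), and Φ ∈ ℝ^{n×p} of full column rank. Then the matrix A = Φ^T Ξ (I - γλP)^{-1}(γP - I) Φ satisfies θ^T A θ < 0 for all nonzero θ ∈ ℝ^p. -/
open Matrix

theorem stmt5 {n p : ℕ} (P : Matrix (Fin n) (Fin n) ℝ)
    (hpos : ∀ i j, 0 ≤ P i j) (hrow : ∀ i, ∑ j, P i j = 1)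
    (ξ : Fin n → ℝ) (hξpos : ∀ i, 0 < ξ i) (hξsum : ∑ i, ξ i = 1)
    (hstat : ∀ j, ∑ i, ξ i * P i j = ξ j)
    (γ lam : ℝ) (hγ : γ ∈ Set.Ioo (0:ℝ) 1) (hlam : lam ∈ Set.Ioo (0:ℝ) 1)
    (Φ : Matrix (Fin n) (Fin p) ℝ)
    (hΦ : LinearIndependent ℝ (fun j : Fin p => fun i : Fin n => Φ i j)) :
    ∀ θ : Fin p → ℝ, θ ≠ 0 →
      θ ⬝ᵥ (Φᵀ * Matrix.diagonal ξ
        * ((1 : Matrix (Fin n) (Fin n) ℝ) - (γ * lam) • P)⁻¹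
        * (γ • P - 1) * Φ).mulVec θ < 0 := by
  obtain ⟨hγ0, hγ1⟩ := hγ
  obtain ⟨hl0, hl1⟩ := hlam
  intro θ hθ
  -- the weighted embedding
  set T : (Fin n → ℝ) → EuclideanSpace ℝ (Fin n) :=
    fun v => WithLp.toLp 2 (fun i => Real.sqrt (ξ i) * v i) with hT
  have hinner : ∀ u v : Fin n → ℝ, (inner ℝ (T u) (T v) : ℝ) = ∑ i, ξ i * (u i * v i) := by
    intro u v
    rw [PiLp.inner_apply]
    apply Finset.sum_congr rfl
    intro i _
    have : Real.sqrt (ξ i) * Real.sqrt (ξ i) = ξ i :=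
      Real.mul_self_sqrt (hξpos i).le
    simp only [hT, PiLp.toLp_apply, RCLike.inner_apply, starRingEnd_apply, star_trivial]
    rw [mul_mul_mul_comm, this, mul_comm (v i)]
  have hnormsq : ∀ v : Fin n → ℝ, ‖T v‖ ^ 2 = ∑ i, ξ i * (v i * v i) := by
    intro v
    rw [← real_inner_self_eq_norm_sq, hinner]
  -- contraction property of P in the weighted norm
  have hcontr : ∀ v : Fin n → ℝ, ‖T (P.mulVec v)‖ ≤ ‖T v‖ := by
    intro v
    rw [← pow_le_pow_iff_left₀ (norm_nonneg _) (norm_nonneg _) two_ne_zero]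
    rw [hnormsq, hnormsq]
    have step1 : ∀ i, (P.mulVec v i) * (P.mulVec v i) ≤ ∑ j, P i j * (v j * v j) := by
      intro i
      have := Finset.sum_mul_sq_le_sq_mul_sq Finset.univ
        (fun j => Real.sqrt (P i j)) (fun j => Real.sqrt (P i j) * v j)
      have e1 : ∀ j, Real.sqrt (P i j) * (Real.sqrt (P i j) * v j) = P i j * v j := by
        intro j; rw [← mul_assoc, Real.mul_self_sqrt (hpos i j)]
      have e2 : ∀ j, Real.sqrt (P i j) ^ 2 = P i j := fun j => Real.sq_sqrt (hpos i j)
      have e3 : ∀ j, (Real.sqrt (P i j) * v j) ^ 2 = P i j * (v j * v j) := by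
        intro j; rw [mul_pow, e2]; ring
      simp only [e1] at this
      calc (P.mulVec v i) * (P.mulVec v i) = (∑ j, P i j * v j) ^ 2 := by
            simp [Matrix.mulVec, dotProduct, sq]
        _ ≤ (∑ j, Real.sqrt (P i j) ^ 2) * ∑ j, (Real.sqrt (P i j) * v j) ^ 2 := this
        _ = (∑ j, P i j) * ∑ j, P i j * (v j * v j) := by
            rw [Finset.sum_congr rfl (fun j _ => e2 j),
              Finset.sum_congr rfl (fun j _ => e3 j)]
        _ = ∑ j, P i j * (v j * v j) := by rw [hrow i, one_mul]
    calc ∑ i, ξ i * (P.mulVec v i * P.mulVec v i)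
        ≤ ∑ i, ξ i * ∑ j, P i j * (v j * v j) := by
          apply Finset.sum_le_sum
          intro i _
          exact mul_le_mul_of_nonneg_left (step1 i) (hξpos i).le
      _ = ∑ j, (∑ i, ξ i * P i j) * (v j * v j) := by
          simp_rw [Finset.mul_sum, Finset.sum_mul]
          rw [Finset.sum_comm]
          exact Finset.sum_congr rfl fun j _ => Finset.sum_congr rfl fun i _ => by ring
      _ = ∑ j, ξ j * (v j * v j) := by
          apply Finset.sum_congr rfl; intro j _; rw [hstat j]
  -- T is compatible with linear operations
  have hTzero : ∀ v : Fin n → ℝ, T v = 0 → v = 0 := by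
    intro v hv
    funext i
    have := congrArg (fun w : EuclideanSpace ℝ (Fin n) => w i) hv
    simp only [hT, PiLp.toLp_apply, PiLp.zero_apply] at this
    have hs : Real.sqrt (ξ i) ≠ 0 := Real.sqrt_ne_zero'.mpr (hξpos i)
    have : Real.sqrt (ξ i) * v i = 0 := this
    simpa [hs] using this
  set S : Matrix (Fin n) (Fin n) ℝ := (1 : Matrix (Fin n) (Fin n) ℝ) - (γ * lam) • P
    with hSdef
  have hgl0 : 0 < γ * lam := mul_pos hγ0 hl0
  have hgl1 : γ * lam < 1 := by nlinarith
  -- S is invertible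
  have hdet : S.det ≠ 0 := by
    intro hd
    obtain ⟨v, hv, hSv⟩ := (Matrix.exists_mulVec_eq_zero_iff).2 hd
    have hveq : v = (γ * lam) • (P.mulVec v) := by
      have : S.mulVec v = v - (γ * lam) • (P.mulVec v) := by
        rw [hSdef, Matrix.sub_mulVec, Matrix.one_mulVec, Matrix.smul_mulVec]
      rw [this] at hSv
      exact sub_eq_zero.1 hSv
    have hTv : T v = (γ * lam) • T (P.mulVec v) := by
      ext i
      simp only [hT, PiLp.toLp_apply, PiLp.smul_apply]
      rw [congrFun hveq i]
      simp [Pi.smul_apply, smul_eq_mul]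
      ring
    have h1 : ‖T v‖ ≤ (γ * lam) * ‖T v‖ := by
      calc ‖T v‖ = (γ * lam) * ‖T (P.mulVec v)‖ := by
            rw [hTv, norm_smul, Real.norm_eq_abs, abs_of_pos hgl0]
        _ ≤ (γ * lam) * ‖T v‖ := by
            exact mul_le_mul_of_nonneg_left (hcontr v) hgl0.le
    have h2 : 0 < ‖T v‖ := by
      rcases eq_or_lt_of_le (norm_nonneg (T v)) with h | h
      · exact absurd (hTzero v (norm_eq_zero.1 h.symm)) hv
      · exact h
    nlinarith
  have hdu : IsUnit S.det := isUnit_iff_ne_zero.2 hdet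
  have hS1 : S * S⁻¹ = 1 := Matrix.mul_nonsing_inv S hdu
  have hS2 : S⁻¹ * S = 1 := Matrix.nonsing_inv_mul S hdu
  -- the key matrix identity
  have key : S * ((γ * (1 - lam)) • (S⁻¹ * P) - 1) = γ • P - 1 := by
    rw [Matrix.mul_sub, Matrix.mul_smul, ← Matrix.mul_assoc, hS1, Matrix.one_mul,
      Matrix.mul_one, hSdef]
    ext i j
    simp only [Matrix.sub_apply, Matrix.smul_apply, Matrix.one_apply, smul_eq_mul]
    by_cases hij : i = j <;> simp [hij] <;> ring
  have hid : S⁻¹ * (γ • P - 1) = (γ * (1 - lam)) • (S⁻¹ * P) - 1 := by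
    rw [← key, ← Matrix.mul_assoc, hS2, Matrix.one_mul]
  -- x = Φ θ is nonzero
  set x : Fin n → ℝ := Φ.mulVec θ with hxdef
  have hxne : x ≠ 0 := by
    intro hx0
    apply hθ
    have := Fintype.linearIndependent_iff.1 hΦ θ ?_
    · funext j; exact this j
    · funext i
      have := congrFun hx0 i
      simp only [hxdef, Matrix.mulVec, dotProduct] at this
      simpa [mul_comm] using this
  have hTx : 0 < ‖T x‖ := by
    rcases (norm_nonneg (T x)).eq_or_lt with h | h
    · exact absurd (hTzero x (norm_eq_zero.1 h.symm)) hxne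
    · exact h
  -- rewrite the quadratic form
  set u : Fin n → ℝ := S⁻¹.mulVec (P.mulVec x) with hudef
  have hz : (S⁻¹ * (γ • P - 1)).mulVec x = (γ * (1 - lam)) • u - x := by
    rw [hid, Matrix.sub_mulVec, Matrix.one_mulVec, Matrix.smul_mulVec,
      ← Matrix.mulVec_mulVec, hudef]
  have hval : θ ⬝ᵥ (Φᵀ * Matrix.diagonal ξ * S⁻¹ * (γ • P - 1) * Φ).mulVec θ
      = (inner ℝ (T x) (T ((γ * (1 - lam)) • u - x)) : ℝ) := by
    rw [hinner]
    simp only [← Matrix.mulVec_mulVec]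
    rw [dotProduct_mulVec, Matrix.vecMul_transpose, ← hxdef]
    rw [show S⁻¹.mulVec ((γ • P - 1).mulVec x) = (S⁻¹ * (γ • P - 1)).mulVec x from
      Matrix.mulVec_mulVec .., hz]
    simp only [dotProduct, Matrix.mulVec_diagonal]
    exact Finset.sum_congr rfl fun i _ => by ring
  rw [hval]
  -- expand the inner product
  have hTlin : T ((γ * (1 - lam)) • u - x) = (γ * (1 - lam)) • T u - T x := by
    ext i
    simp only [hT, PiLp.toLp_apply, Pi.sub_apply, Pi.smul_apply, PiLp.sub_apply, PiLp.smul_apply,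
      smul_eq_mul]
    ring
  rw [hTlin, inner_sub_right, real_inner_smul_right, real_inner_self_eq_norm_sq]
  -- bound ‖T u‖
  have hu_eq : u = P.mulVec x + (γ * lam) • (P.mulVec u) := by
    have h1 : S.mulVec u = P.mulVec x := by
      rw [hudef, Matrix.mulVec_mulVec, hS1, Matrix.one_mulVec]
    have h2 : S.mulVec u = u - (γ * lam) • (P.mulVec u) := by
      rw [hSdef, Matrix.sub_mulVec, Matrix.one_mulVec, Matrix.smul_mulVec]
    rw [h2] at h1
    funext i
    have := congrFun h1 i
    simp only [Pi.sub_apply, Pi.add_apply, Pi.smul_apply, smul_eq_mul] at this ⊢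
    linarith
  have hTu_eq : T u = T (P.mulVec x) + (γ * lam) • T (P.mulVec u) := by
    ext i
    simp only [hT, PiLp.toLp_apply, PiLp.add_apply, PiLp.smul_apply, smul_eq_mul]
    rw [congrFun hu_eq i]
    simp only [Pi.add_apply, Pi.smul_apply, smul_eq_mul]
    ring
  have hTu_bound : ‖T u‖ ≤ ‖T x‖ + (γ * lam) * ‖T u‖ := by
    calc ‖T u‖ ≤ ‖T (P.mulVec x)‖ + ‖(γ * lam) • T (P.mulVec u)‖ := by
          rw [hTu_eq]; exact norm_add_le _ _
      _ ≤ ‖T x‖ + (γ * lam) * ‖T u‖ := by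
          rw [norm_smul, Real.norm_eq_abs, abs_of_pos hgl0]
          exact add_le_add (hcontr x)
            (mul_le_mul_of_nonneg_left (hcontr u) hgl0.le)
  have hCS : (inner ℝ (T x) (T u) : ℝ) ≤ ‖T x‖ * ‖T u‖ := real_inner_le_norm _ _
  have hγl : 0 < γ * (1 - lam) := by nlinarith
  have hun : 0 ≤ ‖T u‖ := norm_nonneg _
  nlinarith [mul_le_mul_of_nonneg_left hCS hγl.le, sq_nonneg (‖T x‖ - ‖T u‖),
    mul_le_mul_of_nonneg_left hTu_bound hγl.le, mul_pos hTx hTx]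
end

section
/- If the symmetric part of a square matrix B is negative definite, then for sufficiently small step sizes the affine iteration θ_{k+1} = θ_k + α_k(Bθ_k + b) with α_k → 0, Σα_k = ∞ converges to θ* = -B^{-1}b. -/
/-!
With `e k = θ k - θ*` the iteration reads `e (k+1) = e k + α k • B e k`. Compactness of the unit
sphere gives `m > 0` with `⟪x, B x⟫ ≤ -m ‖x‖²`, so once `α k ‖B‖² ≤ m` the squared error
contracts by the factor `1 - m α k ≤ exp (-m α k)`, and divergence of `∑ α k` drives the product
of these factors to `0`.
-/

open Matrix Filter Topology Finset
open scoped RealInnerProductSpace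

theorem Matrix.isUnit_of_dotProduct_mulVec_neg {n : Type*} [Fintype n] [DecidableEq n]
    {B : Matrix n n ℝ} (hB : ∀ x ≠ 0, x ⬝ᵥ B *ᵥ x < 0) : IsUnit B := by
  refine mulVec_injective_iff_isUnit.mp <| (injective_iff_map_eq_zero B.mulVecLin).mpr ?_
  intro x hx
  by_contra hx0
  rw [mulVecLin_apply] at hx
  simpa [hx] using hB x hx0

theorem le_mul_exp_neg_sum_of_le_one_sub_mul {u α : ℕ → ℝ} (hu : ∀ k, 0 ≤ u k)
    (hstep : ∀ k, u (k + 1) ≤ (1 - α k) * u k) (n : ℕ) :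
    u n ≤ u 0 * Real.exp (-∑ k ∈ range n, α k) := by
  induction n with
  | zero => simp
  | succ n ih =>
    calc u (n + 1) ≤ (1 - α n) * u n := hstep n
      _ ≤ Real.exp (-α n) * (u 0 * Real.exp (-∑ k ∈ range n, α k)) :=
        mul_le_mul (by linarith [Real.add_one_le_exp (-α n)]) ih (hu n) (Real.exp_nonneg _)
      _ = u 0 * Real.exp (-∑ k ∈ range (n + 1), α k) := by
        rw [sum_range_succ, neg_add, Real.exp_add]; ring

theorem tendsto_zero_of_eventually_le_one_sub_mul {u α : ℕ → ℝ} (hu : ∀ k, 0 ≤ u k)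
    (hα : ∀ k, 0 ≤ α k) (hα_sum : ¬ Summable α)
    (hstep : ∀ᶠ k in atTop, u (k + 1) ≤ (1 - α k) * u k) : Tendsto u atTop (𝓝 0) := by
  obtain ⟨N, hN⟩ := eventually_atTop.mp hstep
  rw [← tendsto_add_atTop_iff_nat N]
  have hbound := le_mul_exp_neg_sum_of_le_one_sub_mul (u := fun n => u (n + N))
    (α := fun k => α (k + N)) (fun k => hu _)
    (fun k => by simpa only [add_right_comm k 1 N] using hN (k + N) (by omega))
  have hsum : Tendsto (fun n => ∑ k ∈ range n, α (k + N)) atTop atTop :=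
    (not_summable_iff_tendsto_nat_atTop_of_nonneg fun k => hα _).mp
      ((summable_nat_add_iff N).not.mpr hα_sum)
  have hexp : Tendsto (fun n => u N * Real.exp (-∑ k ∈ range n, α (k + N))) atTop (𝓝 0) := by
    simpa using (Real.tendsto_exp_atBot.comp (tendsto_neg_atTop_atBot.comp hsum)).const_mul (u N)
  exact squeeze_zero (fun n => hu _) (by simpa using hbound) hexp

section InnerProductSpace

variable {E : Type*} [NormedAddCommGroup E] [InnerProductSpace ℝ E]

theorem exists_pos_inner_map_self_le_neg_mul_norm_sq [FiniteDimensional ℝ E] (T : E →L[ℝ] E)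
    (hT : ∀ x ≠ 0, ⟪x, T x⟫ < 0) : ∃ m > 0, ∀ x, ⟪x, T x⟫ ≤ -m * ‖x‖ ^ 2 := by
  rcases subsingleton_or_nontrivial E with hE | hE
  · exact ⟨1, one_pos, fun x => by simp [Subsingleton.elim x 0]⟩
  obtain ⟨u, hu, hmax⟩ := (isCompact_sphere (0 : E) 1).exists_isMaxOn
    (NormedSpace.sphere_nonempty.mpr zero_le_one)
    (by fun_prop : Continuous fun x => ⟪x, T x⟫).continuousOn
  refine ⟨-⟪u, T u⟫, neg_pos.mpr (hT u (ne_zero_of_mem_unit_sphere ⟨u, hu⟩)), fun x => ?_⟩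
  rcases eq_or_ne x 0 with rfl | hx
  · simp
  have hx' : 0 < ‖x‖ := norm_pos_iff.mpr hx
  have hmem : ‖x‖⁻¹ • x ∈ Metric.sphere (0 : E) 1 := by simp [norm_smul, hx'.ne']
  have hscale : ⟪x, T x⟫ = ‖x‖ ^ 2 * ⟪‖x‖⁻¹ • x, T (‖x‖⁻¹ • x)⟫ := by
    rw [map_smul, inner_smul_left, inner_smul_right, conj_trivial]
    field_simp
  rw [hscale]
  nlinarith [isMaxOn_iff.mp hmax _ hmem, pow_pos hx' 2]

theorem norm_add_smul_map_sq_le (T : E →L[ℝ] E) {x : E} {m a : ℝ}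
    (hx : ⟪x, T x⟫ ≤ -m * ‖x‖ ^ 2) (ha : 0 ≤ a) (haT : a * ‖T‖ ^ 2 ≤ m) :
    ‖x + a • T x‖ ^ 2 ≤ (1 - m * a) * ‖x‖ ^ 2 := by
  have hTx : ‖T x‖ ^ 2 ≤ ‖T‖ ^ 2 * ‖x‖ ^ 2 := by
    rw [← mul_pow]; exact pow_le_pow_left₀ (norm_nonneg _) (T.le_opNorm x) 2
  rw [norm_add_sq_real, norm_smul, inner_smul_right, mul_pow, Real.norm_eq_abs, sq_abs]
  nlinarith [mul_le_mul_of_nonneg_left hTx (sq_nonneg a),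
    mul_le_mul_of_nonneg_right haT (mul_nonneg ha (sq_nonneg ‖x‖))]

theorem tendsto_zero_of_add_smul_map [FiniteDimensional ℝ E] (T : E →L[ℝ] E)
    (hT : ∀ x ≠ 0, ⟪x, T x⟫ < 0) {α : ℕ → ℝ} (hα : ∀ k, 0 ≤ α k) (hα_sum : ¬ Summable α)
    (hα_lim : Tendsto α atTop (𝓝 0)) {e : ℕ → E} (he : ∀ k, e (k + 1) = e k + α k • T (e k)) :
    Tendsto e atTop (𝓝 0) := by
  obtain ⟨m, hm, hmT⟩ := exists_pos_inner_map_self_le_neg_mul_norm_sq T hT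
  have hsmall : ∀ᶠ k in atTop, α k * ‖T‖ ^ 2 < m := by
    have := hα_lim.mul_const (‖T‖ ^ 2)
    rw [zero_mul] at this
    exact this.eventually (gt_mem_nhds hm)
  have hsq : Tendsto (fun k => ‖e k‖ ^ 2) atTop (𝓝 0) := by
    refine tendsto_zero_of_eventually_le_one_sub_mul (α := fun k => m * α k)
      (fun k => by positivity)
      (fun k => mul_nonneg hm.le (hα k)) ((summable_mul_left_iff hm.ne').not.mpr hα_sum) ?_
    filter_upwards [hsmall] with k hk
    rw [he k]
    exact norm_add_smul_map_sq_le T (hmT _) (hα k) hk.le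
  rw [tendsto_zero_iff_norm_tendsto_zero]
  simpa using hsq.sqrt

end InnerProductSpace

theorem stmt18 {p : ℕ} (B : Matrix (Fin p) (Fin p) ℝ)
    (hB : ∀ x : Fin p → ℝ, x ≠ 0 → x ⬝ᵥ B.mulVec x < 0)
    (b : Fin p → ℝ) (α : ℕ → ℝ) (hαpos : ∀ k, 0 < α k)
    (hαdiv : ¬ Summable α) (hα0 : Tendsto α atTop (nhds 0))
    (θ : ℕ → (Fin p → ℝ))
    (hrec : ∀ k, θ (k + 1) = θ k + α k • (B.mulVec (θ k) + b)) :
    Tendsto θ atTop (nhds (-(B⁻¹.mulVec b))) := by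
  set θs := -(B⁻¹ *ᵥ b)
  have hdet : IsUnit B.det := (isUnit_iff_isUnit_det B).mp (isUnit_of_dotProduct_mulVec_neg hB)
  have hfix : B *ᵥ θs = -b := by
    rw [mulVec_neg, mulVec_mulVec, mul_nonsing_inv _ hdet, one_mulVec]
  set T := toEuclideanCLM (𝕜 := ℝ) B
  have hT : ∀ x ≠ 0, ⟪x, T x⟫ < 0 := fun x hx => by
    rw [inner_toEuclideanCLM]
    exact hB _ (by simpa using hx)
  set e : ℕ → EuclideanSpace ℝ (Fin p) := fun k => WithLp.toLp 2 (θ k - θs)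
  have he : ∀ k, e (k + 1) = e k + α k • T (e k) := fun k => by
    simp only [e, T, toEuclideanCLM_toLp, ← WithLp.toLp_smul, ← WithLp.toLp_add, hrec,
      mulVec_sub, hfix, sub_neg_eq_add, sub_add_eq_add_sub]
  have hlim := (PiLp.continuous_ofLp 2 _).tendsto _ |>.comp
    (tendsto_zero_of_add_smul_map T hT (fun k => (hαpos k).le) hαdiv hα0 he)
  simpa [e, Function.comp_def] using hlim.add_const θs
end
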